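/- Suppose a vertex v with incident edges E(v) is deleted from graph G, and let l = max over e in E(v) of the old trussness τ_old(e). Then for every remaining edge e (an edge of G not incident to v) with τ_old(e) > l, the trussness is unchanged: τ_new(e) = τ_old(e). (Rule 2 for node deletion.) -/

import Mathlib

open SimpleGraph

/-- Support of an edge (u,v) in a subgraph K: number of common neighbors of u and v in K. -/
noncomputable def esupp {V : Type*} {G : SimpleGraph V} (K : G.Subgraph) (u v : V) : ℕ :=
  {w | K.Adj u w ∧ K.Adj v w}.ncard

/-- K is a k-truss: every edge of K is contained in at least k-2 triangles within K. -/
def IsKTruss {V : Type*} {G : SimpleGraph V} (K : G.Subgraph) (k : ℕ) : Prop :=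
  ∀ u v, K.Adj u v → k - 2 ≤ esupp K u v

/-- Trussness of edge (u,v) in G: the largest k such that some k-truss of G contains (u,v). -/
noncomputable def tr {V : Type*} (G : SimpleGraph V) (u v : V) : ℕ :=
  sSup {k | ∃ K : G.Subgraph, K.Adj u v ∧ IsKTruss K k}

/-- Support of an edge (u,v) in a graph G. -/
noncomputable def gsupp {V : Type*} (G : SimpleGraph V) (u v : V) : ℕ :=
  {w | G.Adj u w ∧ G.Adj v w}.ncard

/-!
Every truss containing an edge of trussness greater than `l` has all its edges of trussness
greater than `l`, so it avoids `v` and is already a truss of `G - v`. Hence the trussness of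
such an edge cannot drop, and it cannot rise since deleting edges only shrinks the trusses.
-/

namespace SimpleGraph

variable {V : Type*} {G H : SimpleGraph V}

def Subgraph.ofAdjLE (K : G.Subgraph) (h : ∀ a b, K.Adj a b → H.Adj a b) : H.Subgraph where
  verts := K.verts
  Adj := K.Adj
  adj_sub := h _ _
  edge_vert := K.edge_vert
  symm := K.symm

lemma bddAbove_trussLevels [Finite V] (u v : V) :
    BddAbove {k | ∃ K : G.Subgraph, K.Adj u v ∧ IsKTruss K k} := by
  refine ⟨Nat.card V + 2, ?_⟩
  rintro k ⟨K, hKuv, hK⟩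
  have hsupp : esupp K u v ≤ Nat.card V := Set.ncard_le_card _
  have := hK u v hKuv
  omega

lemma le_tr [Finite V] {K : G.Subgraph} {u v : V} {k : ℕ} (huv : K.Adj u v)
    (hK : IsKTruss K k) : k ≤ tr G u v :=
  le_csSup (bddAbove_trussLevels u v) ⟨K, huv, hK⟩

lemma exists_isKTruss_tr [Finite V] {u v : V} (huv : G.Adj u v) :
    ∃ K : G.Subgraph, K.Adj u v ∧ IsKTruss K (tr G u v) :=
  Nat.sSup_mem (s := {k | ∃ K : G.Subgraph, K.Adj u v ∧ IsKTruss K k})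
    ⟨0, ⊤, huv, fun _ _ _ ↦ Nat.zero_le _⟩ (bddAbove_trussLevels u v)

lemma tr_mono [Finite V] (hGH : G ≤ H) (u v : V) : tr G u v ≤ tr H u v :=
  csSup_le_csSup' (bddAbove_trussLevels u v) fun _ ⟨K, huv, hK⟩ ↦
    ⟨K.ofAdjLE fun _ _ h ↦ hGH (K.adj_sub h), huv, hK⟩

lemma tr_le_sSup_tr_incident [Finite V] {v w : V} (hvw : G.Adj v w) :
    tr G v w ≤ sSup (tr G v '' {w | G.Adj v w}) :=
  le_csSup ((Set.toFinite _).image _).bddAbove ⟨w, hvw, rfl⟩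

lemma Subgraph.not_adj_of_isKTruss [Finite V] {K : G.Subgraph} {k : ℕ} (hK : IsKTruss K k)
    {v : V} (hk : sSup (tr G v '' {w | G.Adj v w}) < k) (w : V) : ¬ K.Adj v w := fun hvw ↦
  (le_tr hvw hK).not_gt <| (tr_le_sSup_tr_incident (K.adj_sub hvw)).trans_lt hk

end SimpleGraph

/-- Rule 2 for node deletion: delete a vertex v with its incident edges;
let l be the maximum old trussness over edges incident to v. Then every remaining edge
of old trussness > l keeps its trussness. -/
theorem stmt7 {V : Type*} [Fintype V] (G G' : SimpleGraph V) (v : V)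
    (hG' : ∀ x y, G'.Adj x y ↔ G.Adj x y ∧ x ≠ v ∧ y ≠ v) :
    ∀ x y, G'.Adj x y → sSup ((tr G v) '' {w | G.Adj v w}) < tr G x y →
      tr G' x y = tr G x y := by
  intro x y hxy hl
  have hG'G : G' ≤ G := fun a b h ↦ ((hG' a b).1 h).1
  obtain ⟨K, hKxy, hK⟩ := exists_isKTruss_tr (hG'G hxy)
  have hKv : ∀ a, ¬ K.Adj v a := K.not_adj_of_isKTruss hK hl
  have hKG' : ∀ a b, K.Adj a b → G'.Adj a b := fun a b hab ↦
    (hG' a b).2 ⟨K.adj_sub hab, fun h ↦ hKv b (h ▸ hab), fun h ↦ hKv a (h ▸ hab.symm)⟩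
  exact (tr_mono hG'G x y).antisymm (le_tr (K := K.ofAdjLE hKG') hKxy hK)
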